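/- Let A be a real symmetric positive semidefinite n×n matrix such that I − A is positive definite. Then ‖√(I − A) − I + ½A‖_F ≤ ½ ‖A‖_F². -/

import Mathlib

open Matrix

/-- The Frobenius norm `‖A‖_F = √(tr (Aᵀ A))` of a real square matrix. -/
noncomputable def frobeniusNorm {n : ℕ} (A : Matrix (Fin n) (Fin n) ℝ) : ℝ :=
  Real.sqrt ((Aᵀ * A).trace)

/-- The positive semidefinite square root of a positive semidefinite matrix
(the definition `Matrix.PosSemidef.sqrt` of the older Mathlib, since removed). -/
noncomputable def Matrix.PosSemidef.sqrt {n 𝕜 : Type*} [Fintype n] [RCLike 𝕜] [PartialOrder 𝕜] [StarOrderedRing 𝕜]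
    [DecidableEq n]
    {A : Matrix n n 𝕜} (hA : A.PosSemidef) : Matrix n n 𝕜 :=
  hA.1.eigenvectorUnitary.1 * diagonal ((↑) ∘ (√·) ∘ hA.1.eigenvalues) *
  (star hA.1.eigenvectorUnitary : Matrix n n 𝕜)

/-!
Diagonalise `I - A = U diag(μ) Uᵀ` with `μᵢ ≥ 0`. Then `A`, `√(I - A)` and the matrix on the left
are `U`-conjugates of diagonal matrices, and the Frobenius norm is invariant under orthogonal
conjugation, so everything reduces to the eigenvalues. With `sᵢ = √μᵢ` one has
`√μᵢ - 1 + (1 - μᵢ)/2 = -(1 - sᵢ)²/2`, of absolute value at most `(1 - sᵢ)²(1 + sᵢ)²/2 = (1 - μᵢ)²/2`;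
squaring, summing and using `∑ xᵢ⁴ ≤ (∑ xᵢ²)²` gives the bound.
-/

theorem frobeniusNorm_conjStarAlgAut {n : ℕ} (U : unitary (Matrix (Fin n) (Fin n) ℝ))
    (X : Matrix (Fin n) (Fin n) ℝ) :
    frobeniusNorm (Unitary.conjStarAlgAut ℝ _ U X) = frobeniusNorm X := by
  have hU : star (U : Matrix (Fin n) (Fin n) ℝ) * U = 1 := Unitary.coe_star_mul_self U
  rw [Unitary.conjStarAlgAut_apply]
  generalize (U : Matrix (Fin n) (Fin n) ℝ) = V at hU ⊢
  have hstar : ∀ Y : Matrix (Fin n) (Fin n) ℝ, star Y = Yᵀ := fun Y =>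
    conjTranspose_eq_transpose_of_trivial Y
  unfold frobeniusNorm
  rw [← hstar, ← hstar, star_mul, star_mul, star_star]
  congr 1
  calc trace (V * (star X * star V) * (V * X * star V))
      = trace (V * (star X * (star V * V) * X) * star V) := by simp only [Matrix.mul_assoc]
    _ = trace (star X * X) := by
        rw [hU, Matrix.mul_one, trace_mul_cycle, ← Matrix.mul_assoc, hU, Matrix.one_mul]

theorem frobeniusNorm_diagonal {n : ℕ} (d : Fin n → ℝ) :
    frobeniusNorm (diagonal d) = √(∑ i, d i ^ 2) := by
  simp [frobeniusNorm, diagonal_transpose, diagonal_mul_diagonal, trace_diagonal, sq]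

theorem abs_sqrt_sub_one_add_half_le {μ : ℝ} (hμ : 0 ≤ μ) :
    |√μ - 1 + (1 - μ) / 2| ≤ (1 - μ) ^ 2 / 2 := by
  obtain ⟨s, hs, rfl⟩ : ∃ s, 0 ≤ s ∧ μ = s ^ 2 :=
    ⟨√μ, Real.sqrt_nonneg μ, (Real.sq_sqrt hμ).symm⟩
  rw [Real.sqrt_sq hs]
  calc |s - 1 + (1 - s ^ 2) / 2| = (1 - s) ^ 2 / 2 := by
        rw [show s - 1 + (1 - s ^ 2) / 2 = -((1 - s) ^ 2 / 2) by ring, abs_neg,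
          abs_of_nonneg (by positivity)]
    _ ≤ (1 - s) ^ 2 * (1 + s) ^ 2 / 2 := by gcongr; nlinarith
    _ = (1 - s ^ 2) ^ 2 / 2 := by ring

theorem sqrt_sum_sq_le_half_sq_of_abs_le {ι : Type*} [Fintype ι] (d e : ι → ℝ)
    (h : ∀ i, |d i| ≤ e i ^ 2 / 2) :
    √(∑ i, d i ^ 2) ≤ 1 / 2 * √(∑ i, e i ^ 2) ^ 2 := by
  have hsq : ∀ i, d i ^ 2 ≤ (e i ^ 2) ^ 2 / 4 := fun i => by
    have := pow_le_pow_left₀ (abs_nonneg _) (h i) 2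
    rw [sq_abs] at this; linarith
  have hsum : ∑ i, d i ^ 2 ≤ (1 / 2 * ∑ i, e i ^ 2) ^ 2 := calc
    ∑ i, d i ^ 2 ≤ (∑ i, (e i ^ 2) ^ 2) / 4 := by
        rw [Finset.sum_div]; exact Finset.sum_le_sum fun i _ => hsq i
    _ ≤ (∑ i, e i ^ 2) ^ 2 / 4 := by
        gcongr; exact Finset.sum_sq_le_sq_sum_of_nonneg fun i _ => sq_nonneg _
    _ = (1 / 2 * ∑ i, e i ^ 2) ^ 2 := by ring
  rw [Real.sq_sqrt (by positivity)]
  exact (Real.sqrt_le_sqrt hsum).trans_eq (Real.sqrt_sq (by positivity))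

theorem stmt3_general {n : ℕ} (A : Matrix (Fin n) (Fin n) ℝ)
    (hpd : (1 - A).PosDef) :
    frobeniusNorm (hpd.posSemidef.sqrt - 1 + (1 / 2 : ℝ) • A)
      ≤ (1 / 2 : ℝ) * (frobeniusNorm A) ^ 2 := by
  set hB := hpd.posSemidef
  set μ := hB.1.eigenvalues
  set conj := Unitary.conjStarAlgAut ℝ _ hB.1.eigenvectorUnitary
  have hsqrt : hB.sqrt = conj (diagonal fun i => √(μ i)) := rfl
  have hA : A = conj (diagonal fun i => 1 - μ i) := by
    have hspec : 1 - A = conj (diagonal μ) := hB.1.spectral_theorem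
    have hdiag : (diagonal fun i => 1 - μ i) = 1 - diagonal μ := by
      rw [← diagonal_one, diagonal_sub]
    rw [hdiag, map_sub, map_one, ← hspec, sub_sub_cancel]
  have hM : hB.sqrt - 1 + (1 / 2 : ℝ) • A
      = conj (diagonal fun i => √(μ i) - 1 + (1 - μ i) / 2) := by
    rw [hsqrt, hA, ← map_one conj, ← map_sub, ← map_smul, ← map_add,
      ← diagonal_one, ← diagonal_smul, diagonal_sub, diagonal_add]
    congr 2
    ext i
    simp only [Pi.smul_apply, smul_eq_mul]
    ring
  rw [hM, frobeniusNorm_conjStarAlgAut, frobeniusNorm_diagonal]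
  conv_rhs => rw [hA, frobeniusNorm_conjStarAlgAut, frobeniusNorm_diagonal]
  exact sqrt_sum_sq_le_half_sq_of_abs_le _ _ fun i =>
    abs_sqrt_sub_one_add_half_le (hB.eigenvalues_nonneg i)

/-- If `A` is real symmetric positive semidefinite and `I - A` is
positive definite, then `‖√(I - A) - I + ½ A‖_F ≤ ½ ‖A‖_F²`. -/
theorem stmt3 {n : ℕ} (A : Matrix (Fin n) (Fin n) ℝ)
    (hA : A.PosSemidef) (hpd : (1 - A).PosDef) :
    frobeniusNorm (hpd.posSemidef.sqrt - 1 + (1 / 2 : ℝ) • A)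
      ≤ (1 / 2 : ℝ) * (frobeniusNorm A) ^ 2 :=
  stmt3_general A hpd
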